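/- arXiv:2309.09148 — 2 statements merged into one kernel-verified Lean document; each statement's English description precedes it below -/
import Mathlib

section
/- Soundness of the RG-Iter rule: assume ⊥ has no program transitions and every program transition changes the program component. If Σ ⊨ S sat [inv ∩ b, rely, guar, inv], inv ∩ bᶜ ⊆ post, Id ⊆ guar, stable(inv, rely) and stable(post, rely), then the iteration is valid: Σ ⊨ b ⊚ S sat [inv, rely, guar, post]. -/
namespace PiCore

/-- Event systems of the PiCore event specification language. -/
inductive EventSys (Lbl Prog St : Type) : Type where
  | basic (ev : Set (Lbl × Set St × Prog))
  | atom (ev : Set (Lbl × Set St × Prog))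
  | trig (P : Prog)
  | seq (S1 S2 : EventSys Lbl Prog St)
  | choice (S1 S2 : EventSys Lbl Prog St)
  | join (S1 S2 : EventSys Lbl Prog St)
  | iter (b : Set St) (S : EventSys Lbl Prog St)

/-- Transition kinds of event systems: anonymous τ, event entry, atomic event entry. -/
inductive TranKind (Lbl : Type) : Type where
  | tau
  | evt (l : Lbl)
  | aevt (l : Lbl)

variable {Lbl Prog St Env : Type} (K : Type)
variable (ptran : Env → Prog × St → Prog × St → Prop) (bot : Prog)

/-- Labelled small-step semantics of event systems. -/
inductive esStep (Γ : Env) :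
    EventSys Lbl Prog St × St → TranKind Lbl × K → EventSys Lbl Prog St × St → Prop where
  | basicEvt {ev : Set (Lbl × Set St × Prog)} {l g P s κ}
      (h1 : (l, g, P) ∈ ev) (h2 : s ∈ g) :
      esStep Γ (.basic ev, s) (.evt l, κ) (.trig P, s)
  | atomEvt {ev : Set (Lbl × Set St × Prog)} {l g P s t κ}
      (h1 : (l, g, P) ∈ ev) (h2 : s ∈ g)
      (h3 : Relation.ReflTransGen (fun c c' => ptran Γ c c') (P, s) (bot, t)) :
      esStep Γ (.atom ev, s) (.aevt l, κ) (.trig bot, t)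
  | trigEvt {P Q s t κ} (h : ptran Γ (P, s) (Q, t)) :
      esStep Γ (.trig P, s) (.tau, κ) (.trig Q, t)
  | seqStep {S1 S1' S2 s t} {δ : TranKind Lbl × K}
      (h : esStep Γ (S1, s) δ (S1', t)) (hne : S1' ≠ .trig bot) :
      esStep Γ (.seq S1 S2, s) δ (.seq S1' S2, t)
  | seqFin {S1 S2 s t} {δ : TranKind Lbl × K}
      (h : esStep Γ (S1, s) δ (.trig bot, t)) :
      esStep Γ (.seq S1 S2, s) δ (S2, t)
  | choice1 {S1 S2 S1' s t} {δ : TranKind Lbl × K}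
      (h : esStep Γ (S1, s) δ (S1', t)) :
      esStep Γ (.choice S1 S2, s) δ (S1', t)
  | choice2 {S1 S2 S2' s t} {δ : TranKind Lbl × K}
      (h : esStep Γ (S2, s) δ (S2', t)) :
      esStep Γ (.choice S1 S2, s) δ (S2', t)
  | join1 {S1 S2 S1' s t} {δ : TranKind Lbl × K}
      (h : esStep Γ (S1, s) δ (S1', t)) :
      esStep Γ (.join S1 S2, s) δ (.join S1' S2, t)
  | join2 {S1 S2 S2' s t} {δ : TranKind Lbl × K}
      (h : esStep Γ (S2, s) δ (S2', t)) :
      esStep Γ (.join S1 S2, s) δ (.join S1 S2', t)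
  | joinFin {s κ} :
      esStep Γ (.join (.trig bot) (.trig bot), s) (.tau, κ) (.trig bot, s)
  | iterT {b S s κ} (h : s ∈ b) (hne : S ≠ .trig bot) :
      esStep Γ (.iter b S, s) (.tau, κ) (.seq S (.iter b S), s)
  | iterF {b S s κ} (h : s ∉ b) :
      esStep Γ (.iter b S, s) (.tau, κ) (.trig bot, s)

/-- Linear computations of event systems. -/
inductive cpts (Γ : Env) : List (EventSys Lbl Prog St × St) → Prop where
  | one {S s} : cpts Γ [(S, s)]
  | env {S s t cs} (h : cpts Γ ((S, t) :: cs)) : cpts Γ ((S, s) :: (S, t) :: cs)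
  | act {S1 S2 s t cs} {δ : TranKind Lbl × K}
      (h1 : esStep K ptran bot Γ (S1, s) δ (S2, t))
      (h2 : cpts Γ ((S2, t) :: cs)) : cpts Γ ((S1, s) :: (S2, t) :: cs)

/-- Sequential lifting of a computation. -/
def liftSeq (Q : EventSys Lbl Prog St) (c : List (EventSys Lbl Prog St × St)) :
    List (EventSys Lbl Prog St × St) :=
  c.map fun p => (.seq p.1 Q, p.2)

/-- Modular computations of event systems. -/
inductive cptsM (Γ : Env) : List (EventSys Lbl Prog St × St) → Prop where
  | one {S s} : cptsM Γ [(S, s)]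
  | env {S s t cs} (h : cptsM Γ ((S, t) :: cs)) : cptsM Γ ((S, s) :: (S, t) :: cs)
  | trigEvt {P Q s t cs} (h : ptran Γ (P, s) (Q, t))
      (h2 : cptsM Γ ((.trig Q, t) :: cs)) :
      cptsM Γ ((.trig P, s) :: (.trig Q, t) :: cs)
  | basicEvt {ev : Set (Lbl × Set St × Prog)} {l g P s cs}
      (h1 : (l, g, P) ∈ ev) (h2 : s ∈ g)
      (h3 : cptsM Γ ((.trig P, s) :: cs)) :
      cptsM Γ ((.basic ev, s) :: (.trig P, s) :: cs)
  | atomEvt {ev : Set (Lbl × Set St × Prog)} {l g P s t cs}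
      (h1 : (l, g, P) ∈ ev) (h2 : s ∈ g)
      (h3 : Relation.ReflTransGen (fun c c' => ptran Γ c c') (P, s) (bot, t))
      (h4 : cptsM Γ ((.trig bot, t) :: cs)) :
      cptsM Γ ((.atom ev, s) :: (.trig bot, t) :: cs)
  | seqStep {S1 S1' S2 s t cs} {δ : TranKind Lbl × K}
      (h : esStep K ptran bot Γ (S1, s) δ (S1', t)) (hne : S1' ≠ .trig bot)
      (h2 : cptsM Γ ((.seq S1' S2, t) :: cs)) :
      cptsM Γ ((.seq S1 S2, s) :: (.seq S1' S2, t) :: cs)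
  | seqFin {S1 S2 s t cs} {δ : TranKind Lbl × K}
      (h : esStep K ptran bot Γ (S1, s) δ (.trig bot, t))
      (h2 : cptsM Γ ((S2, t) :: cs)) :
      cptsM Γ ((.seq S1 S2, s) :: (S2, t) :: cs)
  | chc1 {S1 S2 S1' s t cs} {δ : TranKind Lbl × K}
      (h : esStep K ptran bot Γ (S1, s) δ (S1', t))
      (h2 : cptsM Γ ((S1', t) :: cs)) :
      cptsM Γ ((.choice S1 S2, s) :: (S1', t) :: cs)
  | chc2 {S1 S2 S2' s t cs} {δ : TranKind Lbl × K}
      (h : esStep K ptran bot Γ (S2, s) δ (S2', t))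
      (h2 : cptsM Γ ((S2', t) :: cs)) :
      cptsM Γ ((.choice S1 S2, s) :: (S2', t) :: cs)
  | join1 {S1 S2 S1' s t cs} {δ : TranKind Lbl × K}
      (h : esStep K ptran bot Γ (S1, s) δ (S1', t))
      (h2 : cptsM Γ ((.join S1' S2, t) :: cs)) :
      cptsM Γ ((.join S1 S2, s) :: (.join S1' S2, t) :: cs)
  | join2 {S1 S2 S2' s t cs} {δ : TranKind Lbl × K}
      (h : esStep K ptran bot Γ (S2, s) δ (S2', t))
      (h2 : cptsM Γ ((.join S1 S2', t) :: cs)) :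
      cptsM Γ ((.join S1 S2, s) :: (.join S1 S2', t) :: cs)
  | joinFin {s cs} (h : cptsM Γ ((.trig bot, s) :: cs)) :
      cptsM Γ ((.join (.trig bot) (.trig bot), s) :: (.trig bot, s) :: cs)
  | iterF {b S s cs} (h : s ∉ b) (h2 : cptsM Γ ((.trig bot, s) :: cs)) :
      cptsM Γ ((.iter b S, s) :: (.trig bot, s) :: cs)
  | iterTOne {b S s cs} (h : s ∈ b) (h2 : cptsM Γ ((S, s) :: cs)) :
      cptsM Γ ((.iter b S, s) :: liftSeq (.iter b S) ((S, s) :: cs))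
  | iterTMore {b S s t cs cs'} {δ : TranKind Lbl × K}
      (h : s ∈ b) (h2 : cptsM Γ ((S, s) :: cs))
      (h3 : esStep K ptran bot Γ (((S, s) :: cs).getLast (List.cons_ne_nil _ _)) δ
              (.trig bot, t))
      (h4 : cptsM Γ ((.iter b S, t) :: cs')) :
      cptsM Γ ((.iter b S, s) ::
        (liftSeq (.iter b S) ((S, s) :: cs) ++ (.iter b S, t) :: cs'))


section RG

variable (Γ : Env)

/-- The assumption function: the initial state is in `pre` and every environment
step (consecutive configurations with identical event systems) satisfies `rely`. -/
def Assume (pre : Set St) (rely : Set (St × St)) :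
    Set (List (EventSys Lbl Prog St × St)) :=
  {cl | (∀ c ∈ cl.head?, c.2 ∈ pre) ∧
    ∀ i : ℕ, (h : i + 1 < cl.length) →
      (cl.get ⟨i, Nat.lt_of_succ_lt h⟩).1 = (cl.get ⟨i + 1, h⟩).1 →
      ((cl.get ⟨i, Nat.lt_of_succ_lt h⟩).2, (cl.get ⟨i + 1, h⟩).2) ∈ rely}

/-- The commitment function: every component step (consecutive configurations
related by a labelled event-system transition) satisfies `guar`, and the final
state is in `post` whenever the final event system is the terminated event ⟨⊥⟩. -/
def Commit (guar : Set (St × St)) (post : Set St) :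
    Set (List (EventSys Lbl Prog St × St)) :=
  {cl | (∀ i : ℕ, (h : i + 1 < cl.length) →
      (∃ δ : TranKind Lbl × K,
        esStep K ptran bot Γ (cl.get ⟨i, Nat.lt_of_succ_lt h⟩) δ (cl.get ⟨i + 1, h⟩)) →
      ((cl.get ⟨i, Nat.lt_of_succ_lt h⟩).2, (cl.get ⟨i + 1, h⟩).2) ∈ guar) ∧
    (∀ c ∈ cl.getLast?, c.1 = EventSys.trig bot → c.2 ∈ post)}

/-- Computations of an event system `S` starting from the initial state `s`. -/
def cptsFrom (S : EventSys Lbl Prog St) (s : St) :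
    Set (List (EventSys Lbl Prog St × St)) :=
  {cl | cpts K ptran bot Γ cl ∧ cl.head? = some (S, s)}

/-- Validity of a rely-guarantee specification for an event system:
`Σ ⊨ ES sat [pre, rely, guar, post]`. -/
def esValid (S : EventSys Lbl Prog St)
    (pre : Set St) (rely guar : Set (St × St)) (post : Set St) : Prop :=
  ∀ s : St, cptsFrom K ptran bot Γ S s ∩ Assume pre rely ⊆
    Commit K ptran bot Γ guar post

/-- Program computations. -/
inductive pcpts : List (Prog × St) → Prop where
  | one {P s} : pcpts [(P, s)]
  | env {P s t cs} (h : pcpts ((P, t) :: cs)) : pcpts ((P, s) :: (P, t) :: cs)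
  | step {P Q s t cs} (h : ptran Γ (P, s) (Q, t))
      (h2 : pcpts ((Q, t) :: cs)) : pcpts ((P, s) :: (Q, t) :: cs)

/-- The assumption function at the program level. -/
def pAssume (pre : Set St) (rely : Set (St × St)) : Set (List (Prog × St)) :=
  {cl | (∀ c ∈ cl.head?, c.2 ∈ pre) ∧
    ∀ i : ℕ, (h : i + 1 < cl.length) →
      (cl.get ⟨i, Nat.lt_of_succ_lt h⟩).1 = (cl.get ⟨i + 1, h⟩).1 →
      ((cl.get ⟨i, Nat.lt_of_succ_lt h⟩).2, (cl.get ⟨i + 1, h⟩).2) ∈ rely}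

/-- The commitment function at the program level, with termination at ⊥. -/
def pCommit (guar : Set (St × St)) (post : Set St) : Set (List (Prog × St)) :=
  {cl | (∀ i : ℕ, (h : i + 1 < cl.length) →
      ptran Γ (cl.get ⟨i, Nat.lt_of_succ_lt h⟩) (cl.get ⟨i + 1, h⟩) →
      ((cl.get ⟨i, Nat.lt_of_succ_lt h⟩).2, (cl.get ⟨i + 1, h⟩).2) ∈ guar) ∧
    (∀ c ∈ cl.getLast?, c.1 = bot → c.2 ∈ post)}

/-- Program-level validity: `Σ ⊨p P sat [pre, rely, guar, post]`. -/
def pValid (P : Prog) (pre : Set St) (rely guar : Set (St × St)) (post : Set St) :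
    Prop :=
  ∀ s : St,
    {cl : List (Prog × St) | pcpts ptran Γ cl ∧ cl.head? = some (P, s)} ∩
      pAssume pre rely ⊆ pCommit ptran bot Γ guar post

end RG

/-- `stable f g`: the set `f` is stable under the relation `g`. -/
def stable {St : Type} (f : Set St) (g : Set (St × St)) : Prop :=
  ∀ x y : St, x ∈ f → (x, y) ∈ g → y ∈ f

/-- The identity relation on states. -/
def IdRel (St : Type) : Set (St × St) := {p | p.1 = p.2}

end PiCore

/-! By induction on the length of a computation of `b ⊚ S` from an `inv`-state. An environment
step keeps `b ⊚ S` and, by stability, the invariant. If `s ∉ b` the loop exits to `⟨⊥⟩` in a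
`post`-state, which no component step can leave and which the environment preserves. If `s ∈ b`
the rest is a computation of `S ▷ (b ⊚ S)`: a lifted computation of `S` from `inv ∩ b`, possibly
followed, once `S` terminates in an `inv`-state, by a strictly shorter computation of `b ⊚ S`.
The loop's own τ-steps do not change the state, so they lie in `Id ⊆ guar`. -/

namespace PiCore

def RelyStep {Lbl Prog St : Type} (rely : Set (St × St)) (c c' : EventSys Lbl Prog St × St) :
    Prop :=
  c.1 = c'.1 → (c.2, c'.2) ∈ rely

def GuarStep {Lbl Prog St Env : Type} (K : Type) (ptran : Env → Prog × St → Prog × St → Prop)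
    (bot : Prog) (Γ : Env) (guar : Set (St × St)) (c c' : EventSys Lbl Prog St × St) : Prop :=
  (∃ δ : TranKind Lbl × K, esStep K ptran bot Γ c δ c') → (c.2, c'.2) ∈ guar

variable {Lbl Prog St Env K : Type} {ptran : Env → Prog × St → Prog × St → Prop} {bot : Prog}
  {Γ : Env} {pre post : Set St} {rely guar : Set (St × St)}

theorem mem_assume_iff {cl : List (EventSys Lbl Prog St × St)} :
    cl ∈ Assume pre rely ↔ (∀ c ∈ cl.head?, c.2 ∈ pre) ∧ cl.IsChain (RelyStep rely) := by
  simp only [Assume, Set.mem_ofPred_eq, List.isChain_iff_getElem, RelyStep, List.get_eq_getElem]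

theorem mem_commit_iff {cl : List (EventSys Lbl Prog St × St)} :
    cl ∈ Commit K ptran bot Γ guar post ↔
      cl.IsChain (GuarStep K ptran bot Γ guar) ∧
        ∀ c ∈ cl.getLast?, c.1 = .trig bot → c.2 ∈ post := by
  simp only [Commit, Set.mem_ofPred_eq, List.isChain_iff_getElem, GuarStep, List.get_eq_getElem]

theorem head_mem_of_cons_mem_assume {c : EventSys Lbl Prog St × St} {cs}
    (h : c :: cs ∈ Assume pre rely) : c.2 ∈ pre :=
  (mem_assume_iff.1 h).1 c rfl

theorem tail_mem_assume {pre' : Set St} {c c' : EventSys Lbl Prog St × St} {cs}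
    (h : c :: c' :: cs ∈ Assume pre rely) (h' : c'.2 ∈ pre') : c' :: cs ∈ Assume pre' rely :=
  mem_assume_iff.2 ⟨by simpa using h', (List.isChain_cons_cons.1 (mem_assume_iff.1 h).2).2⟩

theorem relyStep_of_cons_cons_mem_assume {c c' : EventSys Lbl Prog St × St} {cs}
    (h : c :: c' :: cs ∈ Assume pre rely) : RelyStep rely c c' :=
  (List.isChain_cons_cons.1 (mem_assume_iff.1 h).2).1

theorem cons_cons_mem_commit_iff {c c' : EventSys Lbl Prog St × St} {cs} :
    c :: c' :: cs ∈ Commit K ptran bot Γ guar post ↔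
      GuarStep K ptran bot Γ guar c c' ∧ c' :: cs ∈ Commit K ptran bot Γ guar post := by
  simp only [mem_commit_iff, List.isChain_cons_cons, List.getLast?_cons_cons, and_assoc]

theorem not_esStep_of_fst_eq_trig_bot
    (hbot : ∀ (Γ : Env) (s : St) (c : Prog × St), ¬ ptran Γ (bot, s) c)
    {c c' : EventSys Lbl Prog St × St} {δ : TranKind Lbl × K} (hc : c.1 = .trig bot) :
    ¬ esStep K ptran bot Γ c δ c' := by
  obtain ⟨_, s⟩ := c
  subst hc
  rintro ⟨⟩
  exact hbot _ _ _ ‹_›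

theorem not_esStep_iter_iter {b b' : Set St} {S S' : EventSys Lbl Prog St} {s t : St}
    {δ : TranKind Lbl × K} : ¬ esStep K ptran bot Γ (.iter b S, s) δ (.iter b' S', t) := by
  rintro ⟨⟩

theorem esStep_of_seq_seq {X X' I : EventSys Lbl Prog St} {s t : St} {δ : TranKind Lbl × K}
    (h : esStep K ptran bot Γ (.seq X I, s) δ (.seq X' I, t)) :
    esStep K ptran bot Γ (X, s) δ (X', t) := by
  cases h with
  | seqStep h => exact h

theorem cpts_append_singleton {c q : EventSys Lbl Prog St × St} {cs} {δ : TranKind Lbl × K}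
    (h : cpts K ptran bot Γ (c :: cs))
    (hq : esStep K ptran bot Γ ((c :: cs).getLast (List.cons_ne_nil _ _)) δ q) :
    cpts K ptran bot Γ (c :: cs ++ [q]) := by
  induction cs generalizing c with
  | nil => exact .act hq .one
  | cons c' cs ih =>
    cases h with
    | env h => exact .env (ih h hq)
    | act h₁ h₂ => exact .act h₁ (ih h₂ hq)

theorem cpts_seq_cases {S₁ I : EventSys Lbl Prog St} {s : St} {cl}
    (h : cpts K ptran bot Γ cl) (hh : cl.head? = some (.seq S₁ I, s)) :
    ∃ cl₁, cpts K ptran bot Γ ((S₁, s) :: cl₁) ∧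
      (cl = liftSeq I ((S₁, s) :: cl₁) ∨
        ∃ (δ : TranKind Lbl × K) (t : St) (cl₂ : List (EventSys Lbl Prog St × St)),
          esStep K ptran bot Γ (((S₁, s) :: cl₁).getLast (List.cons_ne_nil _ _)) δ
            (.trig bot, t) ∧
          cpts K ptran bot Γ ((I, t) :: cl₂) ∧
          cl = liftSeq I ((S₁, s) :: cl₁) ++ (I, t) :: cl₂) := by
  induction h generalizing S₁ s with
  | one =>
    obtain ⟨rfl, rfl⟩ := Prod.mk.inj (Option.some.inj hh)
    exact ⟨[], .one, .inl rfl⟩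
  | env _ ih =>
    obtain ⟨rfl, rfl⟩ := Prod.mk.inj (Option.some.inj hh)
    obtain ⟨cl₁, hc₁, hcl⟩ := ih rfl
    refine ⟨_, .env hc₁, hcl.imp (fun h => by rw [h]; rfl) ?_⟩
    exact fun ⟨δ, t, cl₂, hl, hc₂, h⟩ => ⟨δ, t, cl₂, hl, hc₂, by rw [h]; rfl⟩
  | act hstep hc ih =>
    obtain ⟨rfl, rfl⟩ := Prod.mk.inj (Option.some.inj hh)
    cases hstep with
    | seqStep hstep =>
      obtain ⟨cl₁, hc₁, hcl⟩ := ih rfl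
      refine ⟨_, .act hstep hc₁, hcl.imp (fun h => by rw [h]; rfl) ?_⟩
      exact fun ⟨δ, t, cl₂, hl, hc₂, h⟩ => ⟨δ, t, cl₂, hl, hc₂, by rw [h]; rfl⟩
    | seqFin hstep => exact ⟨[], .one, .inr ⟨_, _, _, hstep, hc, rfl⟩⟩

theorem isChain_relyStep_liftSeq_iff {I : EventSys Lbl Prog St} {cl} :
    (liftSeq I cl).IsChain (RelyStep rely) ↔ cl.IsChain (RelyStep rely) := by
  simp only [liftSeq, List.isChain_map, RelyStep, EventSys.seq.injEq, and_true]
  rfl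

theorem isChain_guarStep_liftSeq {I : EventSys Lbl Prog St} {cl}
    (h : cl.IsChain (GuarStep K ptran bot Γ guar)) :
    (liftSeq I cl).IsChain (GuarStep K ptran bot Γ guar) := by
  rw [liftSeq, List.isChain_map]
  exact h.imp fun _ _ hg ⟨δ, hs⟩ => hg ⟨δ, esStep_of_seq_seq hs⟩

theorem esValid_trig_bot (hbot : ∀ (Γ : Env) (s : St) (c : Prog × St), ¬ ptran Γ (bot, s) c)
    (hpost : stable post rely) :
    esValid K ptran bot Γ (.trig bot : EventSys Lbl Prog St) post rely guar post := by
  rintro s cl ⟨⟨hc, hh⟩, ha⟩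
  induction hc generalizing s with
  | one =>
    obtain ⟨rfl, rfl⟩ := Prod.mk.inj (Option.some.inj hh)
    exact mem_commit_iff.2 ⟨.singleton _, by simpa using head_mem_of_cons_mem_assume ha⟩
  | env _ ih =>
    obtain ⟨rfl, rfl⟩ := Prod.mk.inj (Option.some.inj hh)
    have ht := hpost _ _ (head_mem_of_cons_mem_assume ha) (relyStep_of_cons_cons_mem_assume ha rfl)
    refine cons_cons_mem_commit_iff.2 ⟨fun ⟨_, h⟩ => ?_, ih _ (tail_mem_assume ha ht) rfl⟩
    exact (not_esStep_of_fst_eq_trig_bot hbot rfl h).elim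
  | act hstep =>
    obtain ⟨rfl, rfl⟩ := Prod.mk.inj (Option.some.inj hh)
    exact (not_esStep_of_fst_eq_trig_bot hbot rfl hstep).elim

/-- Soundness of sequential composition, with the second component only required to be
correct on computations shorter than `cl`, so that the loop can use it inside its induction. -/
theorem seq_mem_commit (hbot : ∀ (Γ : Env) (s : St) (c : Prog × St), ¬ ptran Γ (bot, s) c)
    {S₁ I : EventSys Lbl Prog St} {mid : Set St}
    (hS₁ : esValid K ptran bot Γ S₁ pre rely guar mid) {s : St} {cl}
    (hI : ∀ t cl₂, cl₂.length < cl.length →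
      cl₂ ∈ cptsFrom K ptran bot Γ I t ∩ Assume mid rely → cl₂ ∈ Commit K ptran bot Γ guar post)
    (hcl : cl ∈ cptsFrom K ptran bot Γ (.seq S₁ I) s ∩ Assume pre rely) :
    cl ∈ Commit K ptran bot Γ guar post := by
  obtain ⟨⟨hc, hh⟩, ha⟩ := hcl
  have hs : s ∈ pre := (mem_assume_iff.1 ha).1 _ hh
  obtain ⟨cl₁, hc₁, rfl | ⟨δ, t, cl₂, hlast, hc₂, rfl⟩⟩ := cpts_seq_cases hc hh
  · have hr₁ := isChain_relyStep_liftSeq_iff.1 (mem_assume_iff.1 ha).2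
    have hg₁ := (mem_commit_iff.1 (hS₁ s ⟨⟨hc₁, rfl⟩, mem_assume_iff.2 ⟨by simpa using hs, hr₁⟩⟩)).1
    refine mem_commit_iff.2 ⟨isChain_guarStep_liftSeq hg₁, ?_⟩
    rw [liftSeq, List.getLast?_map]
    simp only [Option.mem_def, Option.map_eq_some_iff]
    rintro _ ⟨_, -, rfl⟩ ⟨⟩
  · obtain ⟨hr₁, hr₂, -⟩ := List.isChain_append.1 (mem_assume_iff.1 ha).2
    set c := ((S₁, s) :: cl₁).getLast (List.cons_ne_nil _ _)
    have hc : c ∈ ((S₁, s) :: cl₁).getLast? := List.getLast?_eq_getLast_of_ne_nil _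
    have hfin : c.1 ≠ .trig bot := fun h => not_esStep_of_fst_eq_trig_bot hbot h hlast
    have hr₁' : ((S₁, s) :: cl₁ ++ [(EventSys.trig bot, t)]).IsChain (RelyStep rely) := by
      refine List.isChain_append.2 ⟨isChain_relyStep_liftSeq_iff.1 hr₁, .singleton _, ?_⟩
      rintro x hx y hy hxy
      obtain rfl : x = c := Option.some_injective _ (hx.symm.trans hc)
      obtain rfl : (.trig bot, t) = y := by simpa using hy
      exact (hfin hxy).elim
    obtain ⟨hg₁, ht⟩ := mem_commit_iff.1
      (hS₁ s ⟨⟨cpts_append_singleton hc₁ hlast, rfl⟩, mem_assume_iff.2 ⟨by simpa using hs, hr₁'⟩⟩)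
    obtain ⟨hg₁, -, hgc⟩ := List.isChain_append.1 hg₁
    have ht : t ∈ mid := ht (.trig bot, t) List.getLast?_concat rfl
    have hcl₂ := hI t ((I, t) :: cl₂) (by simp [liftSeq])
      ⟨⟨hc₂, rfl⟩, mem_assume_iff.2 ⟨by simpa using ht, hr₂⟩⟩
    obtain ⟨hg₂, hpost⟩ := mem_commit_iff.1 hcl₂
    refine mem_commit_iff.2 ⟨List.isChain_append.2 ⟨isChain_guarStep_liftSeq hg₁, hg₂, ?_⟩, ?_⟩
    · rintro x hx y hy -
      rw [liftSeq, List.getLast?_map, hc, Option.map_some] at hx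
      obtain rfl := Option.some_injective _ hx
      obtain rfl : (I, t) = y := by simpa using hy
      exact hgc c hc (.trig bot, t) rfl ⟨δ, hlast⟩
    · rwa [List.getLast?_append_cons]

end PiCore

open PiCore in
theorem rg_iter_sound_general
    {Lbl Prog St Env : Type} (K : Type)
    (ptran : Env → Prog × St → Prog × St → Prop) (bot : Prog)
    (hbot : ∀ (Γ : Env) (s : St) (c : Prog × St), ¬ ptran Γ (bot, s) c)
    (Γ : Env) (b : Set St) (S : EventSys Lbl Prog St)
    (inv : Set St) (rely guar : Set (St × St)) (post : Set St)
    (h1 : esValid K ptran bot Γ S (inv ∩ b) rely guar inv)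
    (h2 : inv ∩ bᶜ ⊆ post)
    (h3 : IdRel St ⊆ guar)
    (h4 : stable inv rely)
    (h5 : stable post rely) :
    esValid K ptran bot Γ (EventSys.iter b S) inv rely guar post := by
  have hid : ∀ u, (u, u) ∈ guar := fun _ => h3 rfl
  intro s cl hcl
  induction hn : cl.length using Nat.strong_induction_on generalizing cl s with
  | _ n ih =>
  obtain ⟨⟨hc, hh⟩, ha⟩ := hcl
  cases hc with
  | one =>
    obtain ⟨rfl, rfl⟩ := Prod.mk.inj (Option.some.inj hh)
    exact mem_commit_iff.2 ⟨.singleton _, by simp⟩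
  | env hc =>
    obtain ⟨rfl, rfl⟩ := Prod.mk.inj (Option.some.inj hh)
    have ht := h4 _ _ (head_mem_of_cons_mem_assume ha) (relyStep_of_cons_cons_mem_assume ha rfl)
    refine cons_cons_mem_commit_iff.2 ⟨fun ⟨_, h⟩ => (not_esStep_iter_iter h).elim, ?_⟩
    exact ih _ (by simp [← hn]) _ ⟨⟨hc, rfl⟩, tail_mem_assume ha ht⟩ rfl
  | act hstep hc =>
    obtain ⟨rfl, rfl⟩ := Prod.mk.inj (Option.some.inj hh)
    have hs := head_mem_of_cons_mem_assume ha
    cases hstep with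
    | iterT hb =>
      refine cons_cons_mem_commit_iff.2 ⟨fun _ => hid _, ?_⟩
      refine seq_mem_commit hbot h1 (fun t cl₂ hlt hcl₂ => ?_)
        ⟨⟨hc, rfl⟩, tail_mem_assume ha ⟨hs, hb⟩⟩
      exact ih _ (by simp [← hn] at hlt ⊢; omega) _ hcl₂ rfl
    | iterF hnb =>
      refine cons_cons_mem_commit_iff.2 ⟨fun _ => hid _, ?_⟩
      exact esValid_trig_bot hbot h5 _ ⟨⟨hc, rfl⟩, tail_mem_assume ha (h2 ⟨hs, hnb⟩)⟩

open PiCore in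
/-- **Soundness of the RG-Iter rule.** -/
theorem rg_iter_sound
    {Lbl Prog St Env : Type} (K : Type)
    (ptran : Env → Prog × St → Prog × St → Prop) (bot : Prog)
    (hbot : ∀ (Γ : Env) (s : St) (c : Prog × St), ¬ ptran Γ (bot, s) c)
    (hneq : ∀ (Γ : Env) (P : Prog) (s t : St), ¬ ptran Γ (P, s) (P, t))
    (Γ : Env) (b : Set St) (S : EventSys Lbl Prog St)
    (inv : Set St) (rely guar : Set (St × St)) (post : Set St)
    (h1 : esValid K ptran bot Γ S (inv ∩ b) rely guar inv)
    (h2 : inv ∩ bᶜ ⊆ post)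
    (h3 : IdRel St ⊆ guar)
    (h4 : stable inv rely)
    (h5 : stable post rely) :
    esValid K ptran bot Γ (EventSys.iter b S) inv rely guar post :=
  rg_iter_sound_general K ptran bot hbot Γ b S inv rely guar post h1 h2 h3 h4 h5
end

section
/- Soundness of the PiCore proof system for event systems: assume ⊥ has no program transitions, every program transition changes the program component, and the program-level proof system is sound (Σ ⊢p P sat [pre,rely,guar,post] implies Σ ⊨p P sat [pre,rely,guar,post]). Then for every event system ES, derivability implies validity: Σ ⊢ ES sat [pre, rely, guar, post] implies Σ ⊨ ES sat [pre, rely, guar, post]. -/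
namespace PiCore

variable {Lbl Prog St Env : Type} (K : Type)
variable (ptran : Env → Prog × St → Prog × St → Prop) (bot : Prog)

section Hoare
variable {Lbl Prog St Env : Type}
variable (prules : Env → Prog → Set St → Set (St × St) → Set (St × St) → Set St → Prop)

/-- The PiCore rely-guarantee proof system for event systems,
relative to a program-level proof system `prules`. -/
inductive rghoare (Γ : Env) :
    EventSys Lbl Prog St → Set St → Set (St × St) → Set (St × St) → Set St → Prop where
  | basicEvt {ev : Set (Lbl × Set St × Prog)} {pre rely guar post}
      (h : ∀ l g P, (l, g, P) ∈ ev → prules Γ P (pre ∩ g) rely guar post)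
      (hst : stable pre rely) (hid : IdRel St ⊆ guar) :
      rghoare Γ (.basic ev) pre rely guar post
  | atomEvt {ev : Set (Lbl × Set St × Prog)} {pre rely guar post}
      (h : ∀ l g P, (l, g, P) ∈ ev → ∀ V : St,
        prules Γ P (pre ∩ g ∩ {V}) (IdRel St) Set.univ ({s | (V, s) ∈ guar} ∩ post))
      (h1 : stable pre rely) (h2 : stable post rely) :
      rghoare Γ (.atom ev) pre rely guar post
  | trigEvt {P pre rely guar post}
      (h : prules Γ P pre rely guar post) :
      rghoare Γ (.trig P) pre rely guar post
  | seq {S1 S2 pre mid rely guar post}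
      (h1 : rghoare Γ S1 pre rely guar mid)
      (h2 : rghoare Γ S2 mid rely guar post) :
      rghoare Γ (.seq S1 S2) pre rely guar post
  | choice {S1 S2 pre rely guar post}
      (h1 : rghoare Γ S1 pre rely guar post)
      (h2 : rghoare Γ S2 pre rely guar post) :
      rghoare Γ (.choice S1 S2) pre rely guar post
  | join {S1 S2 pre1 pre2 rely rely1 rely2 guar guar1 guar2 post1 post2}
      (h1 : rghoare Γ S1 pre1 rely1 guar1 post1)
      (h2 : rghoare Γ S2 pre2 rely2 guar2 post2)
      (h3 : guar1 ∪ guar2 ⊆ guar)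
      (h4 : rely ∪ guar2 ⊆ rely1)
      (h5 : rely ∪ guar1 ⊆ rely2)
      (h6 : IdRel St ⊆ guar) :
      rghoare Γ (.join S1 S2) (pre1 ∩ pre2) rely guar (post1 ∩ post2)
  | iter {b S inv rely guar post}
      (h1 : rghoare Γ S (inv ∩ b) rely guar inv)
      (h2 : inv ∩ bᶜ ⊆ post)
      (h3 : IdRel St ⊆ guar)
      (h4 : stable inv rely)
      (h5 : stable post rely) :
      rghoare Γ (.iter b S) inv rely guar post
  | conseq {S pre pre' rely rely' guar guar' post post'}
      (h : rghoare Γ S pre' rely' guar' post')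
      (h1 : pre ⊆ pre') (h2 : rely ⊆ rely')
      (h3 : guar' ⊆ guar) (h4 : post' ⊆ post) :
      rghoare Γ S pre rely guar post

end Hoare

end PiCore

/-!
The proof goes through a step-indexed safety predicate `Safe`. Every rule of the proof
system yields safety at all indices of its conclusion from safety at all indices of its premises;
for the event rules, from program-level validity, which is preserved along program transitions
because a program transition always changes the program and so is never read as an environment
step. A configuration that is safe at all indices then satisfies the commitment along every
computation from it whose environment steps lie in `rely`.
-/

namespace PiCore

variable {Lbl Prog St Env K : Type}
  {ptran : Env → Prog × St → Prog × St → Prop} {bot : Prog} {Γ : Env}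

def StepWithin {α : Type} (step : α × St → α × St → Prop) (R : Set (St × St))
    (c c' : α × St) : Prop :=
  step c c' → (c.2, c'.2) ∈ R

theorem mem_Assume_iff {pre : Set St} {rely : Set (St × St)}
    {cl : List (EventSys Lbl Prog St × St)} :
    cl ∈ Assume pre rely ↔
      (∀ c ∈ cl.head?, c.2 ∈ pre) ∧
        cl.IsChain (StepWithin (fun c c' => c.1 = c'.1) rely) := by
  simp [Assume, StepWithin, List.isChain_iff_getElem]

theorem mem_pAssume_iff {pre : Set St} {rely : Set (St × St)} {cl : List (Prog × St)} :
    cl ∈ pAssume pre rely ↔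
      (∀ c ∈ cl.head?, c.2 ∈ pre) ∧
        cl.IsChain (StepWithin (fun c c' => c.1 = c'.1) rely) := by
  simp [pAssume, StepWithin, List.isChain_iff_getElem]

theorem mem_Commit_iff {guar : Set (St × St)} {post : Set St}
    {cl : List (EventSys Lbl Prog St × St)} :
    cl ∈ Commit K ptran bot Γ guar post ↔
      cl.IsChain (StepWithin (fun c c' => ∃ δ, esStep K ptran bot Γ c δ c') guar) ∧
        ∀ c ∈ cl.getLast?, c.1 = .trig bot → c.2 ∈ post := by
  simp [Commit, StepWithin, List.isChain_iff_getElem]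

theorem mem_pCommit_iff {guar : Set (St × St)} {post : Set St} {cl : List (Prog × St)} :
    cl ∈ pCommit ptran bot Γ guar post ↔
      cl.IsChain (StepWithin (ptran Γ) guar) ∧
        ∀ c ∈ cl.getLast?, c.1 = bot → c.2 ∈ post := by
  simp [pCommit, StepWithin, List.isChain_iff_getElem]

theorem cons_cons_mem_Commit_iff {guar : Set (St × St)} {post : Set St}
    {c c' : EventSys Lbl Prog St × St} {cs : List (EventSys Lbl Prog St × St)} :
    c :: c' :: cs ∈ Commit K ptran bot Γ guar post ↔
      StepWithin (fun c c' => ∃ δ, esStep K ptran bot Γ c δ c') guar c c' ∧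
        c' :: cs ∈ Commit K ptran bot Γ guar post := by
  simp only [mem_Commit_iff, List.isChain_cons_cons, List.getLast?_cons_cons, and_assoc]

theorem cons_cons_mem_pCommit_iff {guar : Set (St × St)} {post : Set St}
    {c c' : Prog × St} {cs : List (Prog × St)} :
    c :: c' :: cs ∈ pCommit ptran bot Γ guar post ↔
      StepWithin (ptran Γ) guar c c' ∧ c' :: cs ∈ pCommit ptran bot Γ guar post := by
  simp only [mem_pCommit_iff, List.isChain_cons_cons, List.getLast?_cons_cons, and_assoc]

variable (ptran bot Γ) in
def PCommitsFrom (rely guar : Set (St × St)) (post : Set St) (c : Prog × St) : Prop :=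
  ∀ cs, pcpts ptran Γ (c :: cs) →
    (c :: cs).IsChain (StepWithin (fun c c' => c.1 = c'.1) rely) →
    c :: cs ∈ pCommit ptran bot Γ guar post

section PCommitsFrom

variable {rely guar : Set (St × St)} {post : Set St}

theorem pValid.pCommitsFrom {P : Prog} {pre : Set St} {s : St}
    (h : pValid ptran bot Γ P pre rely guar post) (hs : s ∈ pre) :
    PCommitsFrom ptran bot Γ rely guar post (P, s) :=
  fun _ hc hch => h s ⟨⟨hc, rfl⟩, mem_pAssume_iff.2 ⟨by simpa using hs, hch⟩⟩

theorem PCommitsFrom.mem_post {s : St} (h : PCommitsFrom ptran bot Γ rely guar post (bot, s)) :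
    s ∈ post :=
  (mem_pCommit_iff.1 (h [] .one (.singleton _))).2 _ rfl rfl

theorem PCommitsFrom.of_rely {P : Prog} {s t : St} (hr : (s, t) ∈ rely)
    (h : PCommitsFrom ptran bot Γ rely guar post (P, s)) :
    PCommitsFrom ptran bot Γ rely guar post (P, t) := fun _ hc hch =>
  (cons_cons_mem_pCommit_iff.1 (h _ (.env hc) (List.isChain_cons_cons.2 ⟨fun _ => hr, hch⟩))).2

theorem PCommitsFrom.of_ptran (hneq : ∀ P s t, ¬ ptran Γ (P, s) (P, t)) {c c' : Prog × St}
    (hp : ptran Γ c c') (h : PCommitsFrom ptran bot Γ rely guar post c) :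
    (c.2, c'.2) ∈ guar ∧ PCommitsFrom ptran bot Γ rely guar post c' := by
  obtain ⟨P, s⟩ := c
  obtain ⟨Q, t⟩ := c'
  have henv : StepWithin (fun c c' => c.1 = c'.1) rely (P, s) (Q, t) := by
    rintro (rfl : P = Q)
    exact absurd hp (hneq P s t)
  refine ⟨(cons_cons_mem_pCommit_iff.1 (h _ (.step hp .one) ?_)).1 hp, fun _ hc hch => ?_⟩
  · exact List.isChain_pair.2 henv
  · exact (cons_cons_mem_pCommit_iff.1
      (h _ (.step hp hc) (List.isChain_cons_cons.2 ⟨henv, hch⟩))).2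

theorem PCommitsFrom.of_reflTransGen (hneq : ∀ P s t, ¬ ptran Γ (P, s) (P, t))
    {c c' : Prog × St} (hcc' : Relation.ReflTransGen (ptran Γ) c c')
    (h : PCommitsFrom ptran bot Γ rely guar post c) :
    PCommitsFrom ptran bot Γ rely guar post c' := by
  induction hcc' with
  | refl => exact h
  | tail _ hp ih => exact (ih.of_ptran hneq hp).2

end PCommitsFrom

variable (K ptran bot Γ) in
/-- `Safe rely guar post n S s`: no computation from `(S, s)` with at most `n` transitions whose
environment steps lie in `rely` has a component step outside `guar`, or reaches ⟨⊥⟩ in a state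
outside `post`. -/
def Safe (rely guar : Set (St × St)) (post : Set St) : ℕ → EventSys Lbl Prog St → St → Prop
  | 0, _, _ => True
  | n + 1, S, s =>
      (S = .trig bot → s ∈ post) ∧
      (∀ t, (s, t) ∈ rely → Safe rely guar post n S t) ∧
      ∀ δ S' t, esStep K ptran bot Γ (S, s) δ (S', t) →
        (s, t) ∈ guar ∧ Safe rely guar post n S' t

section Safe

variable {rely guar : Set (St × St)} {post : Set St}

theorem Safe.of_succ {n : ℕ} {S : EventSys Lbl Prog St} {s : St}
    (h : Safe K ptran bot Γ rely guar post (n + 1) S s) :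
    Safe K ptran bot Γ rely guar post n S s := by
  induction n generalizing S s with
  | zero => trivial
  | succ n ih =>
    exact ⟨h.1, fun t ht => ih (h.2.1 t ht),
      fun δ S' t hs => ⟨(h.2.2 δ S' t hs).1, ih (h.2.2 δ S' t hs).2⟩⟩

theorem Safe.mono {rely' guar' : Set (St × St)} {post' : Set St}
    (hr : rely ⊆ rely') (hg : guar' ⊆ guar) (hp : post' ⊆ post) {n : ℕ}
    {S : EventSys Lbl Prog St} {s : St} (h : Safe K ptran bot Γ rely' guar' post' n S s) :
    Safe K ptran bot Γ rely guar post n S s := by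
  induction n generalizing S s with
  | zero => trivial
  | succ n ih =>
    exact ⟨fun he => hp (h.1 he), fun t ht => ih (h.2.1 t (hr ht)),
      fun δ S' t hs => ⟨hg (h.2.2 δ S' t hs).1, ih (h.2.2 δ S' t hs).2⟩⟩

theorem Safe.inter {rely' guar' : Set (St × St)} {post' : Set St} {n : ℕ}
    {S : EventSys Lbl Prog St} {s : St} (h : Safe K ptran bot Γ rely guar post n S s)
    (h' : Safe K ptran bot Γ rely' guar' post' n S s) :
    Safe K ptran bot Γ (rely ∩ rely') (guar ∩ guar') (post ∩ post') n S s := by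
  induction n generalizing S s with
  | zero => trivial
  | succ n ih =>
    refine ⟨fun he => ⟨h.1 he, h'.1 he⟩, fun t ht => ih (h.2.1 t ht.1) (h'.2.1 t ht.2),
      fun δ S' t hs => ?_⟩
    obtain ⟨hg, hsafe⟩ := h.2.2 δ S' t hs
    obtain ⟨hg', hsafe'⟩ := h'.2.2 δ S' t hs
    exact ⟨⟨hg, hg'⟩, ih hsafe hsafe'⟩

theorem safe_of_invariant {S : EventSys Lbl Prog St} {inv : Set St} (hst : stable inv rely)
    (hpost : ∀ s ∈ inv, S = .trig bot → s ∈ post)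
    (hstep : ∀ n, (∀ s ∈ inv, Safe K ptran bot Γ rely guar post n S s) →
      ∀ s ∈ inv, ∀ δ S' t, esStep K ptran bot Γ (S, s) δ (S', t) →
        (s, t) ∈ guar ∧ Safe K ptran bot Γ rely guar post n S' t) :
    ∀ n, ∀ s ∈ inv, Safe K ptran bot Γ rely guar post n S s
  | 0, _, _ => trivial
  | n + 1, s, hs =>
    ⟨hpost s hs, fun t ht => safe_of_invariant hst hpost hstep n t (hst s t hs ht),
      hstep n (safe_of_invariant hst hpost hstep n) s hs⟩

theorem safe_trig (hneq : ∀ P s t, ¬ ptran Γ (P, s) (P, t)) {P : Prog} {s : St}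
    (h : PCommitsFrom ptran bot Γ rely guar post (P, s)) (n : ℕ) :
    Safe K ptran bot Γ rely guar post n (.trig (Lbl := Lbl) P) s := by
  induction n generalizing P s with
  | zero => trivial
  | succ n ih =>
    refine ⟨fun he => ?_, fun t ht => ih (h.of_rely ht), fun δ S' t hs => ?_⟩
    · cases he
      exact h.mem_post
    · cases hs with
      | trigEvt hp => exact ⟨(h.of_ptran hneq hp).1, ih (h.of_ptran hneq hp).2⟩

theorem safe_trig_bot (hbot : ∀ s c, ¬ ptran Γ (bot, s) c) (hst : stable post rely) :
    ∀ n, ∀ s ∈ post, Safe K ptran bot Γ rely guar post n (.trig (Lbl := Lbl) bot) s :=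
  safe_of_invariant hst (fun _ hs _ => hs) fun _ _ s _ _ _ _ hs => by
    cases hs with
    | trigEvt hp => exact absurd hp (hbot s _)

theorem safe_basic (hneq : ∀ P s t, ¬ ptran Γ (P, s) (P, t))
    {ev : Set (Lbl × Set St × Prog)} {pre : Set St}
    (hev : ∀ l g P, (l, g, P) ∈ ev → pValid ptran bot Γ P (pre ∩ g) rely guar post)
    (hst : stable pre rely) (hid : IdRel St ⊆ guar) :
    ∀ n, ∀ s ∈ pre, Safe K ptran bot Γ rely guar post n (.basic ev) s :=
  safe_of_invariant hst (fun _ _ he => nomatch he) fun n _ s hs _ _ _ hstep => by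
    cases hstep with
    | basicEvt hmem hg =>
      exact ⟨hid rfl, safe_trig hneq ((hev _ _ _ hmem).pCommitsFrom ⟨hs, hg⟩) n⟩

theorem safe_atom (hbot : ∀ s c, ¬ ptran Γ (bot, s) c)
    (hneq : ∀ P s t, ¬ ptran Γ (P, s) (P, t))
    {ev : Set (Lbl × Set St × Prog)} {pre : Set St}
    (hev : ∀ l g P, (l, g, P) ∈ ev → ∀ V : St,
      pValid ptran bot Γ P (pre ∩ g ∩ {V}) (IdRel St) Set.univ
        ({s | (V, s) ∈ guar} ∩ post))
    (hpre : stable pre rely) (hpost : stable post rely) :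
    ∀ n, ∀ s ∈ pre, Safe K ptran bot Γ rely guar post n (.atom ev) s :=
  safe_of_invariant hpre (fun _ _ he => nomatch he) fun n _ s hs _ _ _ hstep => by
    cases hstep with
    | atomEvt hmem hg hrun =>
      have hbody := (hev _ _ _ hmem s).pCommitsFrom ⟨⟨hs, hg⟩, rfl⟩
      have ht := (hbody.of_reflTransGen hneq hrun).mem_post
      exact ⟨ht.1, safe_trig_bot hbot hpost n _ ht.2⟩

theorem Safe.seq {mid : Set St} {S1 S2 : EventSys Lbl Prog St} {n : ℕ} {s : St}
    (h1 : Safe K ptran bot Γ rely guar mid n S1 s)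
    (h2 : ∀ t ∈ mid, Safe K ptran bot Γ rely guar post n S2 t) :
    Safe K ptran bot Γ rely guar post n (.seq S1 S2) s := by
  induction n generalizing S1 s with
  | zero => trivial
  | succ n ih =>
    have h2' : ∀ t ∈ mid, Safe K ptran bot Γ rely guar post n S2 t :=
      fun t ht => (h2 t ht).of_succ
    refine ⟨fun he => (nomatch he), fun t ht => ih (h1.2.1 t ht) h2', fun δ S' t hstep => ?_⟩
    cases hstep with
    | seqStep hs _ =>
      obtain ⟨hg, hsafe⟩ := h1.2.2 _ _ _ hs
      exact ⟨hg, ih hsafe h2'⟩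
    | seqFin hs =>
      obtain ⟨hg, hsafe⟩ := h1.2.2 _ _ _ hs
      cases n with
      | zero => exact ⟨hg, trivial⟩
      | succ n => exact ⟨hg, h2' t (hsafe.1 rfl)⟩

theorem Safe.choice {S1 S2 : EventSys Lbl Prog St} {n : ℕ} {s : St}
    (h1 : Safe K ptran bot Γ rely guar post n S1 s)
    (h2 : Safe K ptran bot Γ rely guar post n S2 s) :
    Safe K ptran bot Γ rely guar post n (.choice S1 S2) s := by
  induction n generalizing s with
  | zero => trivial
  | succ n ih =>
    refine ⟨fun he => (nomatch he), fun t ht => ih (h1.2.1 t ht) (h2.2.1 t ht),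
      fun δ S' t hstep => ?_⟩
    cases hstep with
    | choice1 hs => exact h1.2.2 _ _ _ hs
    | choice2 hs => exact h2.2.2 _ _ _ hs

theorem Safe.join {rely1 rely2 guar1 guar2 : Set (St × St)} {post1 post2 : Set St}
    (hguar : guar1 ∪ guar2 ⊆ guar) (hrely1 : rely ∪ guar2 ⊆ rely1)
    (hrely2 : rely ∪ guar1 ⊆ rely2) (hid : IdRel St ⊆ guar)
    {S1 S2 : EventSys Lbl Prog St} {n : ℕ} {s : St}
    (h1 : Safe K ptran bot Γ rely1 guar1 post1 n S1 s)
    (h2 : Safe K ptran bot Γ rely2 guar2 post2 n S2 s) :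
    Safe K ptran bot Γ rely guar (post1 ∩ post2) n (.join S1 S2) s := by
  induction n generalizing S1 S2 s with
  | zero => trivial
  | succ n ih =>
    refine ⟨fun he => (nomatch he), fun t ht => ih (h1.2.1 t (hrely1 (.inl ht)))
      (h2.2.1 t (hrely2 (.inl ht))), fun δ S' t hstep => ?_⟩
    cases hstep with
    | join1 hs =>
      obtain ⟨hg, hsafe⟩ := h1.2.2 _ _ _ hs
      exact ⟨hguar (.inl hg), ih hsafe (h2.2.1 t (hrely2 (.inr hg)))⟩
    | join2 hs =>
      obtain ⟨hg, hsafe⟩ := h2.2.2 _ _ _ hs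
      exact ⟨hguar (.inr hg), ih (h1.2.1 t (hrely1 (.inr hg))) hsafe⟩
    | joinFin =>
      refine ⟨hid rfl, (h1.of_succ.inter h2.of_succ).mono ?_ ?_ subset_rfl⟩
      · exact fun p hp => ⟨hrely1 (.inl hp), hrely2 (.inl hp)⟩
      · exact fun p hp => hguar (.inl hp.1)

theorem safe_iter (hbot : ∀ s c, ¬ ptran Γ (bot, s) c) {b inv : Set St}
    {S : EventSys Lbl Prog St}
    (hS : ∀ n, ∀ s ∈ inv ∩ b, Safe K ptran bot Γ rely guar inv n S s)
    (hexit : inv ∩ bᶜ ⊆ post) (hid : IdRel St ⊆ guar)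
    (hinv : stable inv rely) (hpost : stable post rely) :
    ∀ n, ∀ s ∈ inv, Safe K ptran bot Γ rely guar post n (.iter b S) s :=
  safe_of_invariant hinv (fun _ _ he => nomatch he) fun n ih s hs _ _ _ hstep => by
    cases hstep with
    | iterT hb _ => exact ⟨hid rfl, (hS n s ⟨hs, hb⟩).seq ih⟩
    | iterF hb => exact ⟨hid rfl, safe_trig_bot hbot hpost n s (hexit ⟨hs, hb⟩)⟩

end Safe

theorem safe_of_rghoare (hbot : ∀ s c, ¬ ptran Γ (bot, s) c)
    (hneq : ∀ P s t, ¬ ptran Γ (P, s) (P, t))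
    {prules : Env → Prog → Set St → Set (St × St) → Set (St × St) → Set St → Prop}
    (psound : ∀ P pre rely guar post,
      prules Γ P pre rely guar post → pValid ptran bot Γ P pre rely guar post)
    {S : EventSys Lbl Prog St} {pre : Set St} {rely guar : Set (St × St)} {post : Set St}
    (h : rghoare prules Γ S pre rely guar post) :
    ∀ n, ∀ s ∈ pre, Safe K ptran bot Γ rely guar post n S s := by
  induction h with
  | basicEvt hev hst hid =>
    exact safe_basic hneq (fun l g P hmem => psound _ _ _ _ _ (hev l g P hmem)) hst hid
  | atomEvt hev hpre hpost =>
    exact safe_atom hbot hneq (fun l g P hmem V => psound _ _ _ _ _ (hev l g P hmem V)) hpre hpost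
  | trigEvt hP => exact fun n s hs => safe_trig hneq ((psound _ _ _ _ _ hP).pCommitsFrom hs) n
  | seq _ _ ih1 ih2 => exact fun n s hs => (ih1 n s hs).seq (ih2 n)
  | choice _ _ ih1 ih2 => exact fun n s hs => (ih1 n s hs).choice (ih2 n s hs)
  | join _ _ hguar hrely1 hrely2 hid ih1 ih2 =>
    exact fun n s hs => Safe.join hguar hrely1 hrely2 hid (ih1 n s hs.1) (ih2 n s hs.2)
  | iter _ hexit hid hinv hpost ih => exact safe_iter hbot ih hexit hid hinv hpost
  | conseq _ hpre hrely hguar hpost ih =>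
    exact fun n s hs => (ih n s (hpre hs)).mono hrely hguar hpost

theorem mem_Commit_of_safe {rely guar : Set (St × St)} {post : Set St}
    {cl : List (EventSys Lbl Prog St × St)} (hcl : cpts K ptran bot Γ cl) :
    ∀ {S s}, cl.head? = some (S, s) → (∀ n, Safe K ptran bot Γ rely guar post n S s) →
      cl.IsChain (StepWithin (fun c c' => c.1 = c'.1) rely) →
      cl ∈ Commit K ptran bot Γ guar post := by
  induction hcl with
  | one =>
    rintro S s ⟨⟩ hsafe -
    exact mem_Commit_iff.2 ⟨.singleton _, fun _ hlast => by cases hlast; exact (hsafe 1).1⟩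
  | env _ ih =>
    rintro S s ⟨⟩ hsafe hch
    obtain ⟨hrely, hch⟩ := List.isChain_cons_cons.1 hch
    refine cons_cons_mem_Commit_iff.2
      ⟨fun ⟨δ, hstep⟩ => ((hsafe 1).2.2 δ _ _ hstep).1, ?_⟩
    exact ih rfl (fun n => (hsafe (n + 1)).2.1 _ (hrely rfl)) hch
  | act hstep _ ih =>
    rintro S s ⟨⟩ hsafe hch
    refine cons_cons_mem_Commit_iff.2 ⟨fun _ => ((hsafe 1).2.2 _ _ _ hstep).1, ?_⟩
    exact ih rfl (fun n => ((hsafe (n + 1)).2.2 _ _ _ hstep).2) (List.isChain_cons_cons.1 hch).2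

theorem esValid_of_safe {S : EventSys Lbl Prog St} {pre : Set St} {rely guar : Set (St × St)}
    {post : Set St} (h : ∀ n, ∀ s ∈ pre, Safe K ptran bot Γ rely guar post n S s) :
    esValid K ptran bot Γ S pre rely guar post := by
  rintro s cl ⟨⟨hcl, hhead⟩, hassume⟩
  obtain ⟨hpre, hch⟩ := mem_Assume_iff.1 hassume
  exact mem_Commit_of_safe hcl hhead (fun n => h n s (hpre _ hhead)) hch

end PiCore

open PiCore in
/-- **Soundness of the PiCore proof system for event systems:**
derivability implies validity, provided the program-level proof system is sound. -/
theorem picore_proof_system_sound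
    {Lbl Prog St Env : Type} (K : Type)
    (ptran : Env → Prog × St → Prog × St → Prop) (bot : Prog)
    (prules : Env → Prog → Set St → Set (St × St) → Set (St × St) → Set St → Prop)
    (hbot : ∀ (Γ : Env) (s : St) (c : Prog × St), ¬ ptran Γ (bot, s) c)
    (hneq : ∀ (Γ : Env) (P : Prog) (s t : St), ¬ ptran Γ (P, s) (P, t))
    (psound : ∀ (Γ : Env) (P : Prog) pre rely guar post,
      prules Γ P pre rely guar post → pValid ptran bot Γ P pre rely guar post) :
    ∀ (Γ : Env) (ES : EventSys Lbl Prog St)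
      (pre : Set St) (rely guar : Set (St × St)) (post : Set St),
      rghoare prules Γ ES pre rely guar post →
      esValid K ptran bot Γ ES pre rely guar post := fun Γ _ _ _ _ _ h =>
  esValid_of_safe (safe_of_rghoare (hbot Γ) (hneq Γ) (psound Γ) h)
end
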